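/- arXiv:2411.17362 — 4 statements merged into one kernel-verified Lean document; each statement's English description precedes it below -/
import Mathlib

section
/- In any graph H, the number of happy vertices is at least m(H) - m_1(H) = m_{≥2}(H), where m(H) is the number of non-isolated vertices, m_1(H) the number of vertices of degree 1, and m_{≥2}(H) the number of vertices of degree at least 2. -/
/-- A non-isolated vertex is happy if all of its neighbors have degree at least 2. -/
def Happy {V : Type*} [Fintype V] (H : SimpleGraph V) (v : V) : Prop :=
  (∃ u, H.Adj v u) ∧ ∀ u, H.Adj v u → 2 ≤ (H.neighborSet u).ncard

theorem num_happy_ge {V : Type*} [Fintype V] (H : SimpleGraph V) :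
    {v : V | Happy H v}.ncard ≥
      {v : V | ∃ u, H.Adj v u}.ncard - {v : V | (H.neighborSet v).ncard = 1}.ncard ∧
    {v : V | ∃ u, H.Adj v u}.ncard - {v : V | (H.neighborSet v).ncard = 1}.ncard =
      {v : V | 2 ≤ (H.neighborSet v).ncard}.ncard := by
  classical
  set S1 := {v : V | (H.neighborSet v).ncard = 1} with hS1
  set S2 := {v : V | 2 ≤ (H.neighborSet v).ncard} with hS2
  set N := {v : V | ∃ u, H.Adj v u} with hN
  set Hap := {v : V | Happy H v} with hHap
  have hdeg : ∀ v u : V, H.Adj v u → 1 ≤ (H.neighborSet v).ncard := by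
    intro v u h
    have hne : (H.neighborSet v).Nonempty := ⟨u, h⟩
    have := (Set.ncard_pos (H.neighborSet v).toFinite).mpr hne
    omega
  have hNeq : N = S1 ∪ S2 := by
    ext v
    simp only [hN, hS1, hS2, Set.mem_setOf_eq, Set.mem_union]
    constructor
    · rintro ⟨u, hu⟩
      have := hdeg v u hu
      omega
    · rintro (h | h)
      · obtain ⟨u, hu⟩ := Set.ncard_eq_one.mp h
        exact ⟨u, by have : u ∈ H.neighborSet v := hu ▸ rfl; exact this⟩
      · have : 0 < (H.neighborSet v).ncard := by omega
        obtain ⟨u, hu⟩ := (Set.ncard_pos (H.neighborSet v).toFinite).mp this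
        exact ⟨u, hu⟩
  have hdisj : Disjoint S1 S2 := by
    rw [Set.disjoint_left]
    intro v h1 h2
    simp only [hS1, hS2, Set.mem_setOf_eq] at h1 h2
    omega
  have hcard : N.ncard = S1.ncard + S2.ncard := by
    rw [hNeq, Set.ncard_union_eq hdisj S1.toFinite S2.toFinite]
  have heq : N.ncard - S1.ncard = S2.ncard := by omega
  refine ⟨?_, heq⟩
  rw [heq]
  -- show S2.ncard ≤ Hap.ncard
  -- For each v in S2 \ Hap, pick a degree-1 neighbor
  have key : ∀ v ∈ S2 \ Hap, ∃ u, H.Adj v u ∧ (H.neighborSet u).ncard = 1 := by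
    rintro v ⟨hv2, hvh⟩
    simp only [hS2, Set.mem_setOf_eq] at hv2
    have hvne : ∃ u, H.Adj v u := by
      have : 0 < (H.neighborSet v).ncard := by omega
      obtain ⟨u, hu⟩ := (Set.ncard_pos (H.neighborSet v).toFinite).mp this
      exact ⟨u, hu⟩
    simp only [hHap, Set.mem_setOf_eq, Happy, not_and, not_forall] at hvh
    obtain ⟨u, hu, hlt⟩ := hvh hvne
    have h1 := hdeg u v hu.symm
    exact ⟨u, hu, by omega⟩
  set f : V → V := fun v =>
    if h : ∃ u, H.Adj v u ∧ (H.neighborSet u).ncard = 1 then h.choose else v with hf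
  have hfspec : ∀ v ∈ S2 \ Hap, H.Adj v (f v) ∧ (H.neighborSet (f v)).ncard = 1 := by
    intro v hv
    have h := key v hv
    simp only [hf, dif_pos h]
    exact h.choose_spec
  have hmaps : Set.MapsTo f (S2 \ Hap) (S1 ∩ Hap) := by
    intro v hv
    obtain ⟨hadj, hdeg1⟩ := hfspec v hv
    have hv2 : 2 ≤ (H.neighborSet v).ncard := hv.1
    obtain ⟨a, ha⟩ := Set.ncard_eq_one.mp hdeg1
    have hva : v = a := by
      have : v ∈ H.neighborSet (f v) := hadj.symm
      rw [ha] at this; exact this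
    constructor
    · exact hdeg1
    · refine ⟨⟨v, hadj.symm⟩, ?_⟩
      intro w hw
      have : w ∈ H.neighborSet (f v) := hw
      rw [ha] at this
      rw [Set.mem_singleton_iff] at this
      rw [this, ← hva]
      exact hv2
  have hinj : Set.InjOn f (S2 \ Hap) := by
    intro v1 hv1 v2 hv2 hEq
    obtain ⟨h1a, h1d⟩ := hfspec v1 hv1
    obtain ⟨h2a, h2d⟩ := hfspec v2 hv2
    obtain ⟨a, ha⟩ := Set.ncard_eq_one.mp h1d
    have m1 : v1 ∈ H.neighborSet (f v1) := h1a.symm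
    have m2 : v2 ∈ H.neighborSet (f v1) := by rw [hEq]; exact h2a.symm
    rw [ha, Set.mem_singleton_iff] at m1 m2
    rw [m1, m2]
  have hB : (S2 \ Hap).ncard ≤ (S1 ∩ Hap).ncard :=
    Set.ncard_le_ncard_of_injOn f hmaps hinj (S1 ∩ Hap).toFinite
  have hdisj2 : Disjoint (S2 ∩ Hap) (S1 ∩ Hap) := by
    exact Set.disjoint_of_subset Set.inter_subset_left Set.inter_subset_left hdisj.symm
  have hA : (S2 ∩ Hap).ncard + (S1 ∩ Hap).ncard ≤ Hap.ncard := by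
    rw [← Set.ncard_union_eq hdisj2 (S2 ∩ Hap).toFinite (S1 ∩ Hap).toFinite]
    exact Set.ncard_le_ncard (Set.union_subset Set.inter_subset_right Set.inter_subset_right)
      Hap.toFinite
  have hsplit : (S2 ∩ Hap).ncard + (S2 \ Hap).ncard = S2.ncard :=
    Set.ncard_inter_add_ncard_diff_eq_ncard S2 Hap S2.toFinite
  omega
end

section
/- For any graph H with ℓ ≥ 2 edges, the brightness ν(H) satisfies ν(H) ≥ (m_1(H)(m_1(H)-2)/2) / C(m(H),2), where m_1(H) is the number of degree-1 vertices of H and m(H) is the number of non-isolated vertices of H. -/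
/-- A vertex is detectable iff it is non-isolated and either has degree 1 or
all of its neighbors have degree at least 2 (the characterization from the paper). -/
def Detectable {V : Type*} [Fintype V] (H : SimpleGraph V) (v : V) : Prop :=
  (∃ u, H.Adj v u) ∧
    ((H.neighborSet v).ncard = 1 ∨ ∀ u, H.Adj v u → 2 ≤ (H.neighborSet u).ncard)

/-- Index `i` of a labeling `σ` is active if `σ i` is adjacent to an earlier vertex. -/
def Active {V : Type*} [Fintype V] (H : SimpleGraph V)
    (σ : Fin (Fintype.card V) ≃ V) (i : Fin (Fintype.card V)) : Prop :=
  ∃ j, j < i ∧ H.Adj (σ i) (σ j)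

/-- A labeling is bright if there are at least two active indices and the two
largest active indices correspond to detectable vertices. -/
def Bright {V : Type*} [Fintype V] (H : SimpleGraph V)
    (σ : Fin (Fintype.card V) ≃ V) : Prop :=
  ∃ i₁ i₂, i₁ < i₂ ∧ Active H σ i₁ ∧ Active H σ i₂ ∧
    (∀ j, Active H σ j → j ≤ i₂) ∧ (∀ j, Active H σ j → j ≠ i₂ → j ≤ i₁) ∧
    Detectable H (σ i₁) ∧ Detectable H (σ i₂)

/-- The brightness of `H`: the probability that a uniformly random labeling is bright. -/
noncomputable def brightness {V : Type*} [Fintype V] (H : SimpleGraph V) : ℝ :=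
  (Nat.card {σ : Fin (Fintype.card V) ≃ V // Bright H σ} : ℝ) /
    (Nat.factorial (Fintype.card V))

open scoped Classical

section Aux

variable {V : Type*} [Fintype V] (H : SimpleGraph V)

/-- `u` and `v` are the last two non-isolated vertices in the labeling `σ`, in this order. -/
def LastTwo (σ : Fin (Fintype.card V) ≃ V) (u v : V) : Prop :=
  σ.symm u < σ.symm v ∧
    ∀ w, (∃ x, H.Adj w x) → w ≠ u → w ≠ v → σ.symm w < σ.symm u

/-- the non-isolated vertices, as a Finset -/
noncomputable def nonIso : Finset V := Finset.univ.filter (fun v => ∃ u, H.Adj v u)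

lemma mem_nonIso {v : V} : v ∈ nonIso H ↔ ∃ u, H.Adj v u := by simp [nonIso]

/-- the degree-one vertices, as a Finset -/
noncomputable def degOne : Finset V :=
  Finset.univ.filter (fun v => (H.neighborSet v).ncard = 1)

lemma mem_degOne {v : V} : v ∈ degOne H ↔ (H.neighborSet v).ncard = 1 := by simp [degOne]

lemma degOne_subset : degOne H ⊆ nonIso H := by
  intro v hv
  rw [mem_degOne] at hv
  obtain ⟨a, ha⟩ := Set.ncard_eq_one.mp hv
  have : a ∈ H.neighborSet v := by rw [ha]; rfl
  exact (mem_nonIso H).mpr ⟨a, this⟩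

lemma exists_lastTwo (hS : 2 ≤ (nonIso H).card) (σ : Fin (Fintype.card V) ≃ V) :
    ∃ p ∈ (nonIso H).offDiag, LastTwo H σ p.1 p.2 := by
  have hne : (nonIso H).Nonempty := Finset.card_pos.mp (by omega)
  obtain ⟨v, hv, hvmax⟩ := Finset.exists_max_image (nonIso H) (fun w => σ.symm w) hne
  have hne2 : ((nonIso H).erase v).Nonempty := by
    rw [← Finset.card_pos, Finset.card_erase_of_mem hv]; omega
  obtain ⟨u, hu, humax⟩ := Finset.exists_max_image _ (fun w => σ.symm w) hne2
  obtain ⟨hune, huS⟩ := Finset.mem_erase.mp hu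
  refine ⟨(u, v), Finset.mem_offDiag.mpr ⟨huS, hv, hune⟩, ?_, ?_⟩
  · exact lt_of_le_of_ne (hvmax u huS) (fun h => hune (σ.symm.injective h))
  · intro w hw hwu hwv
    have hwmem : w ∈ (nonIso H).erase v :=
      Finset.mem_erase.mpr ⟨hwv, (mem_nonIso H).mpr hw⟩
    exact lt_of_le_of_ne (humax w hwmem) (fun h => hwu (σ.symm.injective h))

lemma lastTwo_unique {σ : Fin (Fintype.card V) ≃ V} {u v u' v' : V}
    (huv : (u, v) ∈ (nonIso H).offDiag) (huv' : (u', v') ∈ (nonIso H).offDiag)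
    (h : LastTwo H σ u v) (h' : LastTwo H σ u' v') : u = u' ∧ v = v' := by
  obtain ⟨hu, hv, hne⟩ := Finset.mem_offDiag.mp huv
  obtain ⟨hu', hv', hne'⟩ := Finset.mem_offDiag.mp huv'
  have hmax : ∀ (a b : V), a ≠ b → LastTwo H σ a b → ∀ w ∈ nonIso H,
      σ.symm w ≤ σ.symm b := by
    intro a b hab hL w hw
    rcases eq_or_ne w b with rfl | hwb
    · exact le_refl _
    rcases eq_or_ne w a with rfl | hwa
    · exact le_of_lt hL.1
    · exact le_of_lt (lt_trans (hL.2 w ((mem_nonIso H).mp hw) hwa hwb) hL.1)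
  have hvv : v = v' := σ.symm.injective
    (le_antisymm (hmax u' v' hne' h' v hv) (hmax u v hne h v' hv'))
  subst hvv
  have hmax2 : ∀ (a : V), a ≠ v → LastTwo H σ a v → ∀ w ∈ nonIso H, w ≠ v →
      σ.symm w ≤ σ.symm a := by
    intro a hab hL w hw hwv
    rcases eq_or_ne w a with rfl | hwa
    · exact le_refl _
    · exact le_of_lt (hL.2 w ((mem_nonIso H).mp hw) hwa hwv)
  exact ⟨σ.symm.injective
    (le_antisymm (hmax2 u' hne' h' u hu hne) (hmax2 u hne h u' hu' hne')), rfl⟩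

lemma lastTwo_trans_mp (π : V ≃ V)
    (hπ : ∀ w, (∃ x, H.Adj (π w) x) ↔ ∃ x, H.Adj w x)
    (σ : Fin (Fintype.card V) ≃ V) (u v : V) (h : LastTwo H σ u v) :
    LastTwo H (σ.trans π) (π u) (π v) := by
  have hsymm : ∀ w : V, (σ.trans π).symm (π w) = σ.symm w := by intro w; simp
  refine ⟨by rw [hsymm, hsymm]; exact h.1, ?_⟩
  intro w hw hwu hwv
  obtain ⟨x, rfl⟩ : ∃ x, w = π x := ⟨π.symm w, (π.apply_symm_apply w).symm⟩
  rw [hsymm, hsymm]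
  exact h.2 x ((hπ x).mp hw) (fun hh => hwu (congrArg π hh))
    (fun hh => hwv (congrArg π hh))

lemma swap_nonIso {a b : V} (ha : a ∈ nonIso H) (hb : b ∈ nonIso H) (w : V) :
    (∃ x, H.Adj (Equiv.swap a b w) x) ↔ ∃ x, H.Adj w x := by
  rcases eq_or_ne w a with rfl | hwa
  · rw [Equiv.swap_apply_left]
    exact iff_of_true ((mem_nonIso H).mp hb) ((mem_nonIso H).mp ha)
  rcases eq_or_ne w b with rfl | hwb
  · rw [Equiv.swap_apply_right]
    exact iff_of_true ((mem_nonIso H).mp ha) ((mem_nonIso H).mp hb)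
  · rw [Equiv.swap_apply_of_ne_of_ne hwa hwb]

lemma card_lastTwo_eq {u v u' v' : V}
    (h : (u, v) ∈ (nonIso H).offDiag) (h' : (u', v') ∈ (nonIso H).offDiag) :
    (Finset.univ.filter fun σ : Fin (Fintype.card V) ≃ V => LastTwo H σ u v).card =
      (Finset.univ.filter fun σ : Fin (Fintype.card V) ≃ V => LastTwo H σ u' v').card := by
  obtain ⟨huS, hvS, hneuv⟩ := Finset.mem_offDiag.mp h
  obtain ⟨huS', hvS', hneuv'⟩ := Finset.mem_offDiag.mp h'
  replace huS : u ∈ nonIso H := huS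
  replace hvS : v ∈ nonIso H := hvS
  replace hneuv : u ≠ v := hneuv
  replace huS' : u' ∈ nonIso H := huS'
  replace hvS' : v' ∈ nonIso H := hvS'
  replace hneuv' : u' ≠ v' := hneuv'
  set v₁ := Equiv.swap u u' v with hv₁def
  have hv₁cases : v₁ = u ∨ v₁ = v := by
    rcases eq_or_ne v u' with rfl | hvu'
    · left; rw [hv₁def, Equiv.swap_apply_right]
    · right; rw [hv₁def, Equiv.swap_apply_of_ne_of_ne (Ne.symm hneuv) hvu']
  have hv₁S : v₁ ∈ nonIso H := by rcases hv₁cases with hh | hh <;> rw [hh] <;> assumption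
  have hv₁u' : v₁ ≠ u' := by
    intro hcon
    have : v = u := (Equiv.swap u u').injective
      (by rw [Equiv.swap_apply_left, ← hv₁def]; exact hcon)
    exact hneuv this.symm
  set π : V ≃ V := (Equiv.swap u u').trans (Equiv.swap v₁ v') with hπdef
  have hπu : π u = u' := by
    rw [hπdef]
    simp only [Equiv.trans_apply, Equiv.swap_apply_left]
    exact Equiv.swap_apply_of_ne_of_ne (Ne.symm hv₁u') hneuv'
  have hπv : π v = v' := by
    rw [hπdef]
    simp only [Equiv.trans_apply, ← hv₁def]
    exact Equiv.swap_apply_left v₁ v'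
  have hπ : ∀ w, (∃ x, H.Adj (π w) x) ↔ ∃ x, H.Adj w x := by
    intro w
    rw [hπdef]
    simp only [Equiv.trans_apply]
    rw [swap_nonIso H hv₁S hvS', swap_nonIso H huS huS']
  have hπ' : ∀ w, (∃ x, H.Adj (π.symm w) x) ↔ ∃ x, H.Adj w x := by
    intro w
    conv_rhs => rw [← π.apply_symm_apply w]
    exact (hπ (π.symm w)).symm
  refine Finset.card_bij' (fun σ _ => σ.trans π) (fun τ _ => τ.trans π.symm) ?_ ?_ ?_ ?_
  · intro σ hσ
    rw [Finset.mem_filter] at hσ ⊢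
    refine ⟨Finset.mem_univ _, ?_⟩
    have := lastTwo_trans_mp H π hπ σ u v hσ.2
    rwa [hπu, hπv] at this
  · intro τ hτ
    rw [Finset.mem_filter] at hτ ⊢
    refine ⟨Finset.mem_univ _, ?_⟩
    have := lastTwo_trans_mp H π.symm hπ' τ u' v' hτ.2
    rwa [← hπu, ← hπv, π.symm_apply_apply, π.symm_apply_apply] at this
  · intro σ _; ext i; simp
  · intro τ _; ext i; simp

lemma card_lastTwo_mul (hS : 2 ≤ (nonIso H).card) {u v : V}
    (h : (u, v) ∈ (nonIso H).offDiag) :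
    (Finset.univ.filter fun σ : Fin (Fintype.card V) ≃ V => LastTwo H σ u v).card *
      (nonIso H).offDiag.card = Nat.factorial (Fintype.card V) := by
  have hdisj : ∀ p ∈ (nonIso H).offDiag, ∀ q ∈ (nonIso H).offDiag, p ≠ q →
      Disjoint (Finset.univ.filter fun σ : Fin (Fintype.card V) ≃ V => LastTwo H σ p.1 p.2)
        (Finset.univ.filter fun σ => LastTwo H σ q.1 q.2) := by
    intro p hp q hq hpq
    rw [Finset.disjoint_left]
    intro σ hσp hσq
    rw [Finset.mem_filter] at hσp hσq
    have := lastTwo_unique H (u := p.1) (v := p.2) (u' := q.1) (v' := q.2)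
      (by simpa using hp) (by simpa using hq) hσp.2 hσq.2
    exact hpq (Prod.ext this.1 this.2)
  have hcover : ((nonIso H).offDiag.biUnion
      (fun p => Finset.univ.filter fun σ : Fin (Fintype.card V) ≃ V => LastTwo H σ p.1 p.2))
      = Finset.univ := by
    apply Finset.eq_univ_of_forall
    intro σ
    obtain ⟨p, hp, hL⟩ := exists_lastTwo H hS σ
    exact Finset.mem_biUnion.mpr ⟨p, hp, Finset.mem_filter.mpr ⟨Finset.mem_univ _, hL⟩⟩
  have hsum : ∑ p ∈ (nonIso H).offDiag,
      (Finset.univ.filter fun σ : Fin (Fintype.card V) ≃ V => LastTwo H σ p.1 p.2).card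
      = Nat.factorial (Fintype.card V) := by
    rw [← Finset.card_biUnion hdisj, hcover, Finset.card_univ,
      Fintype.card_equiv (Fintype.equivFin V).symm, Fintype.card_fin]
  rw [← hsum]
  rw [Finset.sum_congr rfl (fun q hq => card_lastTwo_eq H hq h)]
  rw [Finset.sum_const, smul_eq_mul, mul_comm]

lemma bright_of_lastTwo {σ : Fin (Fintype.card V) ≃ V} {u v : V}
    (hu : (H.neighborSet u).ncard = 1) (hv : (H.neighborSet v).ncard = 1)
    (hnadj : ¬ H.Adj u v) (h : LastTwo H σ u v) : Bright H σ := by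
  obtain ⟨a, ha⟩ := Set.ncard_eq_one.mp hu
  obtain ⟨b, hb⟩ := Set.ncard_eq_one.mp hv
  have hua : H.Adj u a := by rw [← SimpleGraph.mem_neighborSet, ha]; rfl
  have hvb : H.Adj v b := by rw [← SimpleGraph.mem_neighborSet, hb]; rfl
  have hau : a ≠ u := fun hh => H.irrefl (hh ▸ hua)
  have hav : a ≠ v := fun hh => hnadj (hh ▸ hua)
  have hbv : b ≠ v := fun hh => H.irrefl (hh ▸ hvb)
  have hbu : b ≠ u := fun hh => hnadj ((hh ▸ hvb).symm)
  have halt : σ.symm a < σ.symm u := h.2 a ⟨u, hua.symm⟩ hau hav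
  have hblt : σ.symm b < σ.symm u := h.2 b ⟨v, hvb.symm⟩ hbu hbv
  refine ⟨σ.symm u, σ.symm v, h.1, ?_, ?_, ?_, ?_, ?_, ?_⟩
  · exact ⟨σ.symm a, halt, by simp [hua]⟩
  · exact ⟨σ.symm b, lt_trans hblt h.1, by simp [hvb]⟩
  · rintro j ⟨k, hk, hadj⟩
    rcases eq_or_ne (σ j) v with hj | hj
    · exact le_of_eq (by rw [← hj]; simp)
    rcases eq_or_ne (σ j) u with hj' | hj'
    · refine le_of_lt (lt_of_le_of_lt (le_of_eq ?_) h.1)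
      rw [← hj']; simp
    · have hlt : σ.symm (σ j) < σ.symm u := h.2 _ ⟨σ k, hadj⟩ hj' hj
      rw [Equiv.symm_apply_apply] at hlt
      exact le_of_lt (lt_trans hlt h.1)
  · rintro j ⟨k, hk, hadj⟩ hjne
    rcases eq_or_ne (σ j) v with hj | hj
    · exact absurd (by rw [← hj]; simp) hjne
    rcases eq_or_ne (σ j) u with hj' | hj'
    · exact le_of_eq (by rw [← hj']; simp)
    · have hlt : σ.symm (σ j) < σ.symm u := h.2 _ ⟨σ k, hadj⟩ hj' hj
      rw [Equiv.symm_apply_apply] at hlt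
      exact le_of_lt hlt
  · simp only [Equiv.apply_symm_apply]
    exact ⟨⟨a, hua⟩, Or.inl hu⟩
  · simp only [Equiv.apply_symm_apply]
    exact ⟨⟨b, hvb⟩, Or.inl hv⟩

/-- the good pairs: ordered pairs of distinct non-adjacent degree-one vertices -/
noncomputable def goodPairs : Finset (V × V) :=
  (nonIso H).offDiag.filter
    (fun p => p.1 ∈ degOne H ∧ p.2 ∈ degOne H ∧ ¬ H.Adj p.1 p.2)

lemma goodPairs_card_ge :
    (degOne H).card * ((degOne H).card - 2) ≤ (goodPairs H).card := by
  rcases le_or_gt (degOne H).card 2 with h2 | h2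
  · rw [Nat.sub_eq_zero_of_le h2, Nat.mul_zero]
    exact Nat.zero_le _
  -- bad pairs: adjacent pairs of degree-one vertices
  have hbad : ((degOne H).offDiag.filter (fun p => H.Adj p.1 p.2)).card ≤ (degOne H).card := by
    apply Finset.card_le_card_of_injOn (fun p => p.1)
    · intro p hp
      rw [Finset.mem_coe, Finset.mem_filter, Finset.mem_offDiag] at hp
      exact hp.1.1
    · intro p hp q hq hpq
      rw [Finset.mem_coe, Finset.mem_filter, Finset.mem_offDiag] at hp hq
      obtain ⟨a, ha⟩ := Set.ncard_eq_one.mp ((mem_degOne H).mp hp.1.1)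
      have hp2 : p.2 ∈ H.neighborSet p.1 := hp.2
      have hpq' : p.1 = q.1 := hpq
      have hq2 : q.2 ∈ H.neighborSet p.1 := by rw [hpq']; exact hq.2
      rw [ha] at hp2 hq2
      exact Prod.ext hpq' (hp2.trans hq2.symm)
  have hsub : (degOne H).offDiag.filter (fun p => ¬ H.Adj p.1 p.2) ⊆ goodPairs H := by
    intro p hp
    rw [Finset.mem_filter, Finset.mem_offDiag] at hp
    rw [goodPairs, Finset.mem_filter, Finset.mem_offDiag]
    exact ⟨⟨degOne_subset H hp.1.1, degOne_subset H hp.1.2.1, hp.1.2.2⟩,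
      hp.1.1, hp.1.2.1, hp.2⟩
  have hsplit := Finset.card_filter_add_card_filter_not
    (s := (degOne H).offDiag) (p := fun p => H.Adj p.1 p.2)
  have hoff : (degOne H).offDiag.card = (degOne H).card * (degOne H).card - (degOne H).card :=
    Finset.offDiag_card _
  have hle := Finset.card_le_card hsub
  set m₁ := (degOne H).card
  obtain ⟨k, hk⟩ : ∃ k, m₁ = k + 3 := ⟨m₁ - 3, by omega⟩
  have hgoal : m₁ * (m₁ - 2) + m₁ + m₁ ≤ m₁ * m₁ := by
    have h3 : m₁ - 2 = k + 1 := by omega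
    rw [h3, hk]
    nlinarith
  calc m₁ * (m₁ - 2) ≤ (degOne H).offDiag.card - m₁ := by
        rw [hoff]
        exact Nat.le_sub_of_add_le (Nat.le_sub_of_add_le (by linarith [hgoal]))
    _ ≤ ((degOne H).offDiag.filter (fun p => ¬ H.Adj p.1 p.2)).card := by omega
    _ ≤ (goodPairs H).card := hle

end Aux

theorem brightness_ge_of_deg_one {V : Type*} [Fintype V] (H : SimpleGraph V)
    (hE : 2 ≤ H.edgeSet.ncard) :
    brightness H ≥
      (({v : V | (H.neighborSet v).ncard = 1}.ncard : ℝ) *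
          (({v : V | (H.neighborSet v).ncard = 1}.ncard : ℝ) - 2) / 2) /
        (Nat.choose {v : V | ∃ u, H.Adj v u}.ncard 2) := by
  -- translate set ncards to Finset cards
  have hncard : ∀ (p : V → Prop), {v | p v}.ncard = (Finset.univ.filter p).card := by
    intro p
    rw [Set.ncard_eq_toFinset_card', Set.toFinset_setOf]
  have hd1 : {v : V | (H.neighborSet v).ncard = 1}.ncard = (degOne H).card := by
    rw [hncard]; unfold degOne; congr!
  have hni : {v : V | ∃ u, H.Adj v u}.ncard = (nonIso H).card := by
    rw [hncard]; unfold nonIso; congr!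
  set m₁ := (degOne H).card
  set m := (nonIso H).card with hmdef
  rw [hd1, hni]
  -- degenerate case m₁ ≤ 2
  have hbnonneg : 0 ≤ brightness H := by
    unfold brightness
    positivity
  rcases le_or_gt m₁ 2 with hm1 | hm1
  · refine le_trans ?_ hbnonneg
    apply div_nonpos_of_nonpos_of_nonneg
    · apply div_nonpos_of_nonpos_of_nonneg
      · apply mul_nonpos_of_nonneg_of_nonpos
        · positivity
        · have : (m₁ : ℝ) ≤ 2 := by exact_mod_cast hm1
          linarith
      · norm_num
    · positivity
  -- main case
  have hEne : H.edgeSet.Nonempty := by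
    rw [Set.nonempty_iff_ne_empty]
    intro h
    rw [h, Set.ncard_empty] at hE
    omega
  obtain ⟨a, b, hab⟩ : ∃ a b, H.Adj a b := by
    obtain ⟨e, he⟩ := hEne
    induction e using Sym2.ind with
    | _ a b => exact ⟨a, b, H.mem_edgeSet.mp he⟩
  have hS2 : 2 ≤ m := by
    rw [hmdef]
    refine Finset.one_lt_card.mpr ⟨a, ?_, b, ?_, hab.ne⟩
    · exact (mem_nonIso H).mpr ⟨b, hab⟩
    · exact (mem_nonIso H).mpr ⟨a, hab.symm⟩
  -- key counting inequality
  have hBf : (Finset.univ.filter (fun σ : Fin (Fintype.card V) ≃ V => Bright H σ)).card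
      = Nat.card {σ : Fin (Fintype.card V) ≃ V // Bright H σ} := by
    rw [Nat.card_eq_fintype_card, Fintype.card_subtype]
  have hgoodsub : goodPairs H ⊆ (nonIso H).offDiag := Finset.filter_subset _ _
  have hdisj : ∀ p ∈ goodPairs H, ∀ q ∈ goodPairs H, p ≠ q →
      Disjoint (Finset.univ.filter fun σ : Fin (Fintype.card V) ≃ V => LastTwo H σ p.1 p.2)
        (Finset.univ.filter fun σ => LastTwo H σ q.1 q.2) := by
    intro p hp q hq hpq
    rw [Finset.disjoint_left]
    intro σ hσp hσq
    rw [Finset.mem_filter] at hσp hσq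
    have := lastTwo_unique H (u := p.1) (v := p.2) (u' := q.1) (v' := q.2)
      (by simpa using hgoodsub hp) (by simpa using hgoodsub hq) hσp.2 hσq.2
    exact hpq (Prod.ext this.1 this.2)
  have hsub : (goodPairs H).biUnion
      (fun p => Finset.univ.filter fun σ : Fin (Fintype.card V) ≃ V => LastTwo H σ p.1 p.2)
      ⊆ Finset.univ.filter (fun σ : Fin (Fintype.card V) ≃ V => Bright H σ) := by
    intro σ hσ
    rw [Finset.mem_biUnion] at hσ
    obtain ⟨p, hp, hσp⟩ := hσ
    rw [Finset.mem_filter] at hσp ⊢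
    rw [goodPairs, Finset.mem_filter] at hp
    exact ⟨Finset.mem_univ _, bright_of_lastTwo H ((mem_degOne H).mp hp.2.1)
      ((mem_degOne H).mp hp.2.2.1) hp.2.2.2 hσp.2⟩
  have key : (goodPairs H).card * Nat.factorial (Fintype.card V) ≤
      (Finset.univ.filter (fun σ : Fin (Fintype.card V) ≃ V => Bright H σ)).card *
        (nonIso H).offDiag.card := by
    calc (goodPairs H).card * Nat.factorial (Fintype.card V)
        = ∑ _p ∈ goodPairs H, Nat.factorial (Fintype.card V) := by
          rw [Finset.sum_const, smul_eq_mul]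
      _ = ∑ p ∈ goodPairs H,
          (Finset.univ.filter fun σ : Fin (Fintype.card V) ≃ V => LastTwo H σ p.1 p.2).card *
            (nonIso H).offDiag.card := by
          refine Finset.sum_congr rfl (fun p hp => ?_)
          rw [card_lastTwo_mul H hS2 (by simpa using hgoodsub hp)]
      _ = (∑ p ∈ goodPairs H,
          (Finset.univ.filter fun σ : Fin (Fintype.card V) ≃ V => LastTwo H σ p.1 p.2).card) *
            (nonIso H).offDiag.card := by
          rw [Finset.sum_mul]
      _ = ((goodPairs H).biUnion
          (fun p => Finset.univ.filter fun σ : Fin (Fintype.card V) ≃ V =>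
            LastTwo H σ p.1 p.2)).card * (nonIso H).offDiag.card := by
          rw [Finset.card_biUnion hdisj]
      _ ≤ _ := Nat.mul_le_mul_right _ (Finset.card_le_card hsub)
  -- pass to the reals
  have hgood : m₁ * (m₁ - 2) ≤ (goodPairs H).card := goodPairs_card_ge H
  have hoffR : (((nonIso H).offDiag.card : ℝ)) = m * (m - 1) := by
    rw [Finset.offDiag_card, ← hmdef]
    have h1 : (m : ℕ) ≤ m * m := Nat.le_mul_of_pos_left m (by omega)
    push_cast [Nat.cast_sub h1]
    ring
  have hkeyR : ((goodPairs H).card : ℝ) * Nat.factorial (Fintype.card V) ≤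
      (Nat.card {σ : Fin (Fintype.card V) ≃ V // Bright H σ} : ℝ) * (m * (m - 1)) := by
    rw [← hoffR, ← hBf]
    exact_mod_cast key
  have hgoodR : (m₁ : ℝ) * ((m₁ : ℝ) - 2) ≤ ((goodPairs H).card : ℝ) := by
    have h2 : 2 ≤ m₁ := by omega
    calc (m₁ : ℝ) * ((m₁ : ℝ) - 2) = ((m₁ * (m₁ - 2) : ℕ) : ℝ) := by
          push_cast [Nat.cast_sub h2]; ring
      _ ≤ _ := by exact_mod_cast hgood
  have hchoose : ((m.choose 2 : ℕ) : ℝ) = m * (m - 1) / 2 := Nat.cast_choose_two (K := ℝ) m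
  have hchoosepos : (0 : ℝ) < ((m.choose 2 : ℕ) : ℝ) := by
    have : 0 < m.choose 2 := Nat.choose_pos hS2
    exact_mod_cast this
  have hfactpos : (0 : ℝ) < (Nat.factorial (Fintype.card V) : ℝ) := by
    exact_mod_cast Nat.factorial_pos _
  rw [ge_iff_le, brightness, div_le_div_iff₀ hchoosepos hfactpos]
  rw [hchoose]
  have hmm : (0 : ℝ) < (m : ℝ) * ((m : ℝ) - 1) := by
    have : (2 : ℝ) ≤ (m : ℝ) := by exact_mod_cast hS2
    nlinarith
  have hfactnonneg : (0 : ℝ) ≤ (Nat.factorial (Fintype.card V) : ℝ) := le_of_lt hfactpos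
  nlinarith [mul_le_mul_of_nonneg_right hgoodR hfactnonneg, hkeyR,
    mul_le_mul_of_nonneg_right hkeyR (le_of_lt hchoosepos)]
end

section
/- For any graph H with at least 2 edges, the brightness ν(H) satisfies ν(H) ≥ C(m_{≥2}(H), 2) / C(m(H), 2), where m_{≥2}(H) is the number of vertices of degree at least 2 and m(H) the number of non-isolated vertices. -/
namespace BrAux

open Finset
open scoped Classical

variable {V : Type*} [Fintype V] (H : SimpleGraph V)

/-- Finset of non-isolated vertices. -/
noncomputable def SF : Finset V := Finset.univ.filter fun v => ∃ u, H.Adj v u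

/-- Finset of vertices of degree at least 2. -/
noncomputable def DF : Finset V := Finset.univ.filter fun v => 2 ≤ (H.neighborSet v).ncard

lemma mem_SF {v : V} : v ∈ SF H ↔ ∃ u, H.Adj v u := by simp [SF]

lemma mem_DF {v : V} : v ∈ DF H ↔ 2 ≤ (H.neighborSet v).ncard := by simp [DF]

lemma DF_subset_SF : DF H ⊆ SF H := by
  intro v hv
  rw [mem_DF] at hv
  rw [mem_SF]
  have h1 : (H.neighborSet v).Nonempty := by
    rw [← Set.ncard_pos (Set.toFinite _)]; omega
  obtain ⟨u, hu⟩ := h1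
  exact ⟨u, hu⟩

/-- positions of non-isolated vertices -/
noncomputable def T (σ : Fin (Fintype.card V) ≃ V) : Finset (Fin (Fintype.card V)) :=
  Finset.univ.filter fun i => σ i ∈ SF H

lemma mem_T {σ : Fin (Fintype.card V) ≃ V} {i : Fin (Fintype.card V)} :
    i ∈ T H σ ↔ σ i ∈ SF H := by simp [T]

lemma card_T (σ : Fin (Fintype.card V) ≃ V) : (T H σ).card = (SF H).card := by
  apply Finset.card_bij (fun i _ => σ i)
  · intro i hi; exact (mem_T H).mp hi
  · intro i _ j _ h; exact σ.injective h
  · intro v hv; exact ⟨σ.symm v, by simp [mem_T, hv], by simp⟩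

lemma two_le_card_T (hm : 2 ≤ (SF H).card) (σ : Fin (Fintype.card V) ≃ V) : 2 ≤ (T H σ).card := by
  rw [card_T]; exact hm

/-- largest position of a non-isolated vertex -/
noncomputable def p2 (hm : 2 ≤ (SF H).card) (σ : Fin (Fintype.card V) ≃ V) : Fin (Fintype.card V) :=
  (T H σ).max' (Finset.card_pos.mp (by have := two_le_card_T H hm σ; omega))

lemma p2_mem (hm : 2 ≤ (SF H).card) (σ : Fin (Fintype.card V) ≃ V) : p2 H hm σ ∈ T H σ := Finset.max'_mem _ _

lemma le_p2 (hm : 2 ≤ (SF H).card) {σ : Fin (Fintype.card V) ≃ V} {i : Fin (Fintype.card V)} (hi : i ∈ T H σ) :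
    i ≤ p2 H hm σ := Finset.le_max' _ _ hi

lemma erase_nonempty (hm : 2 ≤ (SF H).card) (σ : Fin (Fintype.card V) ≃ V) :
    ((T H σ).erase (p2 H hm σ)).Nonempty := by
  rw [← Finset.card_pos, Finset.card_erase_of_mem (p2_mem H hm σ)]
  have := two_le_card_T H hm σ; omega

/-- second largest position of a non-isolated vertex -/
noncomputable def p1 (hm : 2 ≤ (SF H).card) (σ : Fin (Fintype.card V) ≃ V) : Fin (Fintype.card V) :=
  ((T H σ).erase (p2 H hm σ)).max' (erase_nonempty H hm σ)

lemma p1_mem_erase (hm : 2 ≤ (SF H).card) (σ : Fin (Fintype.card V) ≃ V) :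
    p1 H hm σ ∈ (T H σ).erase (p2 H hm σ) := Finset.max'_mem _ _

lemma p1_mem (hm : 2 ≤ (SF H).card) (σ : Fin (Fintype.card V) ≃ V) : p1 H hm σ ∈ T H σ :=
  Finset.mem_of_mem_erase (p1_mem_erase H hm σ)

lemma le_p1 (hm : 2 ≤ (SF H).card) {σ : Fin (Fintype.card V) ≃ V} {i : Fin (Fintype.card V)} (hi : i ∈ T H σ)
    (hne : i ≠ p2 H hm σ) : i ≤ p1 H hm σ :=
  Finset.le_max' _ _ (Finset.mem_erase.mpr ⟨hne, hi⟩)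

lemma p1_lt_p2 (hm : 2 ≤ (SF H).card) (σ : Fin (Fintype.card V) ≃ V) : p1 H hm σ < p2 H hm σ :=
  lt_of_le_of_ne (le_p2 H hm (p1_mem H hm σ))
    (Finset.ne_of_mem_erase (p1_mem_erase H hm σ))

lemma p1_ne_p2 (hm : 2 ≤ (SF H).card) (σ : Fin (Fintype.card V) ≃ V) : p1 H hm σ ≠ p2 H hm σ :=
  ne_of_lt (p1_lt_p2 H hm σ)

/-- if τ preserves SF then T is unchanged under composition -/
lemma T_trans {τ : V ≃ V} (hτ : ∀ v, τ v ∈ SF H ↔ v ∈ SF H)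
    (σ : Fin (Fintype.card V) ≃ V) : T H (σ.trans τ) = T H σ := by
  ext i
  simp only [mem_T, Equiv.trans_apply]
  exact hτ (σ i)

lemma max'_congr {α : Type*} [LinearOrder α] {s t : Finset α} (h : s = t)
    (hs : s.Nonempty) (ht : t.Nonempty) : s.max' hs = t.max' ht := by subst h; rfl

lemma p2_trans (hm : 2 ≤ (SF H).card) {τ : V ≃ V} (hτ : ∀ v, τ v ∈ SF H ↔ v ∈ SF H)
    (σ : Fin (Fintype.card V) ≃ V) : p2 H hm (σ.trans τ) = p2 H hm σ :=
  max'_congr (T_trans H hτ σ) _ _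

lemma p1_trans (hm : 2 ≤ (SF H).card) {τ : V ≃ V} (hτ : ∀ v, τ v ∈ SF H ↔ v ∈ SF H)
    (σ : Fin (Fintype.card V) ≃ V) : p1 H hm (σ.trans τ) = p1 H hm σ :=
  max'_congr (by rw [T_trans H hτ σ, p2_trans H hm hτ σ]) _ _


lemma exists_leaf (v : V) (h2 : 2 ≤ (H.neighborSet v).ncard) (hnd : ¬ Detectable H v) :
    ∃ u, H.Adj v u ∧ H.neighborSet u = {v} := by
  have hni : ∃ u, H.Adj v u := by
    have h1 : (H.neighborSet v).Nonempty := by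
      rw [← Set.ncard_pos (Set.toFinite _)]; omega
    obtain ⟨u, hu⟩ := h1; exact ⟨u, hu⟩
  rw [Detectable] at hnd
  push_neg at hnd
  obtain ⟨u, hadj, hdeg⟩ := (hnd hni).2
  refine ⟨u, hadj, ?_⟩
  have hv : v ∈ H.neighborSet u := hadj.symm
  have h1 : (H.neighborSet u).ncard = 1 := by
    have : 0 < (H.neighborSet u).ncard :=
      (Set.ncard_pos (Set.toFinite _)).mpr ⟨v, hv⟩
    omega
  obtain ⟨a, ha⟩ := Set.ncard_eq_one.mp h1
  rw [ha] at hv ⊢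
  simp only [Set.mem_singleton_iff] at hv
  rw [hv]

/-- Replacement for a non-detectable high-degree vertex: a leaf neighbor. -/
noncomputable def gfun (v : V) : V :=
  if h : 2 ≤ (H.neighborSet v).ncard ∧ ¬ Detectable H v then
    (exists_leaf H v h.1 h.2).choose
  else v

lemma gfun_spec (v : V) (h2 : 2 ≤ (H.neighborSet v).ncard) :
    (gfun H v = v ∧ Detectable H v) ∨
      (H.Adj v (gfun H v) ∧ H.neighborSet (gfun H v) = {v}) := by
  unfold gfun
  split_ifs with h
  · right; exact (exists_leaf H v h.1 h.2).choose_spec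
  · left
    refine ⟨rfl, ?_⟩
    by_contra hnd
    exact h ⟨h2, hnd⟩

lemma gfun_detectable {v : V} (h2 : 2 ≤ (H.neighborSet v).ncard) :
    Detectable H (gfun H v) := by
  rcases gfun_spec H v h2 with ⟨he, hd⟩ | ⟨hadj, hN⟩
  · rw [he]; exact hd
  · exact ⟨⟨v, hadj.symm⟩, Or.inl (by rw [hN]; simp)⟩

lemma gfun_SF {v : V} (h2 : 2 ≤ (H.neighborSet v).ncard) : gfun H v ∈ SF H :=
  (mem_SF H).mpr (gfun_detectable H h2).1

lemma gfun_ne_DF {v w : V} (h2 : 2 ≤ (H.neighborSet v).ncard)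
    (hw : 2 ≤ (H.neighborSet w).ncard) (hvw : v ≠ w) : gfun H v ≠ w := by
  rcases gfun_spec H v h2 with ⟨he, _⟩ | ⟨_, hN⟩
  · rw [he]; exact hvw
  · intro h
    rw [h] at hN
    have : (H.neighborSet w).ncard = 1 := by rw [hN]; simp
    omega

lemma gfun_inj {v w : V} (h2 : 2 ≤ (H.neighborSet v).ncard)
    (hw : 2 ≤ (H.neighborSet w).ncard) (h : gfun H v = gfun H w) : v = w := by
  rcases gfun_spec H v h2 with ⟨hev, _⟩ | ⟨_, hNv⟩ <;>
    rcases gfun_spec H w hw with ⟨hew, _⟩ | ⟨_, hNw⟩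
  · rw [hev, hew] at h; exact h
  · exfalso
    rw [hev] at h
    rw [← h] at hNw
    have : (H.neighborSet v).ncard = 1 := by rw [hNw]; simp
    omega
  · exfalso
    rw [hew] at h
    rw [h] at hNv
    have : (H.neighborSet w).ncard = 1 := by rw [hNv]; simp
    omega
  · rw [h] at hNv
    rw [hNv] at hNw
    exact (Set.singleton_eq_singleton_iff.mp hNw)


lemma swap_SF {a b : V} (ha : a ∈ SF H) (hb : b ∈ SF H) (v : V) :
    Equiv.swap a b v ∈ SF H ↔ v ∈ SF H := by
  rcases eq_or_ne v a with rfl | hva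
  · simp [ha, hb]
  rcases eq_or_ne v b with rfl | hvb
  · simp [ha, hb]
  · rw [Equiv.swap_apply_of_ne_of_ne hva hvb]

/-- The permutation of `V` replacing `x, y` by their `gfun` values. -/
noncomputable def tau (x y : V) : V ≃ V :=
  (Equiv.swap x (gfun H x)).trans (Equiv.swap y (gfun H y))

section TauFacts

variable {x y : V} (hx : 2 ≤ (H.neighborSet x).ncard) (hy : 2 ≤ (H.neighborSet y).ncard)
  (hxy : x ≠ y)

include hx hy hxy

lemma gfun_ne_gfun : gfun H x ≠ gfun H y := fun h => hxy (gfun_inj H hx hy h)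

lemma tau_x : tau H x y x = gfun H x := by
  rw [tau, Equiv.trans_apply, Equiv.swap_apply_left,
    Equiv.swap_apply_of_ne_of_ne (gfun_ne_DF H hx hy hxy) (gfun_ne_gfun H hx hy hxy)]

lemma tau_y : tau H x y y = gfun H y := by
  rw [tau, Equiv.trans_apply,
    Equiv.swap_apply_of_ne_of_ne (Ne.symm hxy) (Ne.symm (gfun_ne_DF H hx hy hxy)),
    Equiv.swap_apply_left]

lemma tau_gx : tau H x y (gfun H x) = x := by
  rw [tau, Equiv.trans_apply, Equiv.swap_apply_right,
    Equiv.swap_apply_of_ne_of_ne hxy (Ne.symm (gfun_ne_DF H hy hx hxy.symm))]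

lemma tau_SF (v : V) : tau H x y v ∈ SF H ↔ v ∈ SF H := by
  have hxS : x ∈ SF H := DF_subset_SF H ((mem_DF H).mpr hx)
  have hyS : y ∈ SF H := DF_subset_SF H ((mem_DF H).mpr hy)
  rw [tau, Equiv.trans_apply, swap_SF H hyS (gfun_SF H hy),
    swap_SF H hxS (gfun_SF H hx)]

end TauFacts

/-- The injection from "last two positions have degree ≥ 2" labelings to bright ones. -/
noncomputable def F (hm : 2 ≤ (SF H).card) (σ : Fin (Fintype.card V) ≃ V) :
    Fin (Fintype.card V) ≃ V :=
  σ.trans (tau H (σ (p1 H hm σ)) (σ (p2 H hm σ)))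

lemma bright_F (hm : 2 ≤ (SF H).card) (σ : Fin (Fintype.card V) ≃ V)
    (hx : 2 ≤ (H.neighborSet (σ (p1 H hm σ))).ncard)
    (hy : 2 ≤ (H.neighborSet (σ (p2 H hm σ))).ncard) :
    Bright H (F H hm σ) := by
  set x := σ (p1 H hm σ) with hxdef
  set y := σ (p2 H hm σ) with hydef
  have hxy : x ≠ y := fun h => p1_ne_p2 H hm σ (σ.injective h)
  set σ' := F H hm σ with hσ'
  have htau : ∀ v, tau H x y v ∈ SF H ↔ v ∈ SF H := tau_SF H hx hy hxy
  have hT : T H σ' = T H σ := T_trans H htau σ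
  have hp2 : p2 H hm σ' = p2 H hm σ := p2_trans H hm htau σ
  have hp1 : p1 H hm σ' = p1 H hm σ := p1_trans H hm htau σ
  have hv1 : σ' (p1 H hm σ) = gfun H x := by
    rw [hσ', F, Equiv.trans_apply, ← hxdef, ← hydef, tau_x H hx hy hxy]
  have hv2 : σ' (p2 H hm σ) = gfun H y := by
    rw [hσ', F, Equiv.trans_apply, ← hxdef, ← hydef, tau_y H hx hy hxy]
  -- every active index is a position of a non-isolated vertex
  have hact : ∀ j, Active H σ' j → j ∈ T H σ := by
    intro j ⟨k, _, hadj⟩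
    rw [← hT, mem_T, mem_SF]
    exact ⟨σ' k, hadj⟩
  refine ⟨p1 H hm σ, p2 H hm σ, p1_lt_p2 H hm σ, ?_, ?_, ?_, ?_, ?_, ?_⟩
  · -- Active at p1
    rcases gfun_spec H x hx with ⟨he, hd⟩ | ⟨hadj, hN⟩
    · -- gfun x = x, x detectable, use a neighbor of x other than gfun y
      obtain ⟨u, hu, hune⟩ := Set.exists_ne_of_one_lt_ncard (s := H.neighborSet x) (by omega) (gfun H y)
      have huS : u ∈ SF H := (mem_SF H).mpr ⟨x, ((H.mem_neighborSet x u).mp hu).symm⟩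
      set j := σ'.symm u with hj
      have hσ'j : σ' j = u := σ'.apply_symm_apply u
      have hjT : j ∈ T H σ := by rw [← hT, mem_T, hσ'j]; exact huS
      have hjne2 : j ≠ p2 H hm σ := by
        intro h; rw [h] at hσ'j; rw [hσ'j] at hv2; exact hune hv2
      have hjne1 : j ≠ p1 H hm σ := by
        intro h; rw [h] at hσ'j; rw [hσ'j, he] at hv1
        exact H.ne_of_adj ((H.mem_neighborSet x u).mp hu).symm hv1
      refine ⟨j, lt_of_le_of_ne (le_p1 H hm hjT hjne2) hjne1, ?_⟩
      rw [hv1, he, hσ'j]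
      exact (H.mem_neighborSet x u).mp hu
    · -- gfun x is a leaf attached to x; x sits at the old position of gfun x
      set j := σ'.symm x with hj
      have hσ'j : σ' j = x := σ'.apply_symm_apply x
      have hjT : j ∈ T H σ := by
        rw [← hT, mem_T, hσ'j]; exact DF_subset_SF H ((mem_DF H).mpr hx)
      have hjne2 : j ≠ p2 H hm σ := by
        intro h; rw [h] at hσ'j; rw [hσ'j] at hv2
        exact gfun_ne_DF H hy hx hxy.symm hv2.symm
      have hjne1 : j ≠ p1 H hm σ := by
        intro h; rw [h] at hσ'j; rw [hσ'j] at hv1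
        exact H.ne_of_adj hadj hv1
      refine ⟨j, lt_of_le_of_ne (le_p1 H hm hjT hjne2) hjne1, ?_⟩
      rw [hv1, hσ'j]
      exact hadj.symm
  · -- Active at p2
    obtain ⟨u, hu⟩ := (mem_SF H).mp (gfun_SF H hy)
    set j := σ'.symm u with hj
    have hσ'j : σ' j = u := σ'.apply_symm_apply u
    have hjT : j ∈ T H σ := by
      rw [← hT, mem_T, hσ'j, mem_SF]; exact ⟨gfun H y, hu.symm⟩
    have hjne2 : j ≠ p2 H hm σ := by
      intro h; rw [h] at hσ'j; rw [hσ'j] at hv2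
      exact H.ne_of_adj hu hv2.symm
    refine ⟨j, lt_of_le_of_lt (le_p1 H hm hjT hjne2) (p1_lt_p2 H hm σ), ?_⟩
    rw [hv2, hσ'j]
    exact hu
  · intro j hj
    exact le_p2 H hm (hact j hj)
  · intro j hj hne
    exact le_p1 H hm (hact j hj) hne
  · rw [hv1]; exact gfun_detectable H hx
  · rw [hv2]; exact gfun_detectable H hy


lemma p2_congr (hm : 2 ≤ (SF H).card) {σ σ' : Fin (Fintype.card V) ≃ V}
    (h : T H σ = T H σ') : p2 H hm σ = p2 H hm σ' := max'_congr h _ _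

lemma p1_congr (hm : 2 ≤ (SF H).card) {σ σ' : Fin (Fintype.card V) ≃ V}
    (h : T H σ = T H σ') : p1 H hm σ = p1 H hm σ' :=
  max'_congr (by rw [h, p2_congr H hm h]) _ _

noncomputable def pairMap (hm : 2 ≤ (SF H).card) (σ : Fin (Fintype.card V) ≃ V) : V × V :=
  (σ (p1 H hm σ), σ (p2 H hm σ))

lemma pairMap_mem_offDiag (hm : 2 ≤ (SF H).card) (σ : Fin (Fintype.card V) ≃ V) :
    pairMap H hm σ ∈ (SF H).offDiag := by
  rw [Finset.mem_offDiag]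
  exact ⟨(mem_T H).mp (p1_mem H hm σ), (mem_T H).mp (p2_mem H hm σ),
    fun h => p1_ne_p2 H hm σ (σ.injective h)⟩

lemma pairMap_trans (hm : 2 ≤ (SF H).card) {τ : V ≃ V}
    (hτ : ∀ v, τ v ∈ SF H ↔ v ∈ SF H) (σ : Fin (Fintype.card V) ≃ V) :
    pairMap H hm (σ.trans τ) = (τ (σ (p1 H hm σ)), τ (σ (p2 H hm σ))) := by
  rw [pairMap, p1_trans H hm hτ, p2_trans H hm hτ]; rfl

noncomputable def Fib (hm : 2 ≤ (SF H).card) (q : V × V) :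
    Finset (Fin (Fintype.card V) ≃ V) :=
  Finset.univ.filter fun σ => pairMap H hm σ = q

/-- Transporting between fibers. -/
noncomputable def tau2 (x x' y y' : V) : V ≃ V :=
  (Equiv.swap x x').trans (Equiv.swap (Equiv.swap x x' y) y')

lemma tau2_facts {x x' y y' : V} (hx : x ∈ SF H) (hx' : x' ∈ SF H) (hy : y ∈ SF H)
    (hy' : y' ∈ SF H) (hxy : x ≠ y) (hxy' : x' ≠ y') :
    tau2 x x' y y' x = x' ∧ tau2 x x' y y' y = y' ∧
      ∀ v, tau2 x x' y y' v ∈ SF H ↔ v ∈ SF H := by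
  set y₁ := Equiv.swap x x' y with hy₁
  have hy₁S : y₁ ∈ SF H := (swap_SF H hx hx' y).mpr hy
  have hy₁x' : y₁ ≠ x' := by
    rw [hy₁]
    intro h
    have h2 : Equiv.swap x x' y = Equiv.swap x x' x := by
      rw [Equiv.swap_apply_left]; exact h
    exact hxy ((Equiv.swap x x').injective h2).symm
  refine ⟨?_, ?_, ?_⟩
  · rw [tau2, Equiv.trans_apply, Equiv.swap_apply_left,
      Equiv.swap_apply_of_ne_of_ne (Ne.symm hy₁x') hxy']
  · rw [tau2, Equiv.trans_apply, ← hy₁, Equiv.swap_apply_left]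
  · intro v
    rw [tau2, Equiv.trans_apply, swap_SF H hy₁S hy', swap_SF H hx hx']

lemma fib_card_eq (hm : 2 ≤ (SF H).card) {q q' : V × V} (hq : q ∈ (SF H).offDiag)
    (hq' : q' ∈ (SF H).offDiag) : (Fib H hm q).card = (Fib H hm q').card := by
  obtain ⟨x, y⟩ := q
  obtain ⟨x', y'⟩ := q'
  rw [Finset.mem_offDiag] at hq hq'
  obtain ⟨hx, hy, hxy⟩ := hq
  obtain ⟨hx', hy', hxy'⟩ := hq'
  obtain ⟨h1, h2, h3⟩ := tau2_facts H hx hx' hy hy' hxy hxy'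
  set τ := tau2 x x' y y' with hτ
  have h3' : ∀ v, τ.symm v ∈ SF H ↔ v ∈ SF H := by
    intro v
    conv_rhs => rw [← τ.apply_symm_apply v]
    exact (h3 _).symm
  have h1' : τ x = x' := h1
  have h2' : τ y = y' := h2
  refine Finset.card_bij' (fun σ _ => σ.trans τ) (fun σ _ => σ.trans τ.symm) ?_ ?_ ?_ ?_
  · intro σ hσ
    simp only [Fib, Finset.mem_filter, Finset.mem_univ, true_and] at hσ ⊢
    rw [pairMap_trans H hm h3]
    rw [pairMap, Prod.mk.injEq] at hσ
    rw [hσ.1, hσ.2, h1', h2']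
  · intro σ hσ
    simp only [Fib, Finset.mem_filter, Finset.mem_univ, true_and] at hσ ⊢
    rw [pairMap_trans H hm h3']
    rw [pairMap, Prod.mk.injEq] at hσ
    rw [hσ.1, hσ.2, ← h1', ← h2', Equiv.symm_apply_apply, Equiv.symm_apply_apply]
  · intro σ _
    ext i
    simp
  · intro σ _
    ext i
    simp

/-- The set of labelings whose two last non-isolated positions carry degree-two vertices. -/
noncomputable def Pset (hm : 2 ≤ (SF H).card) : Finset (Fin (Fintype.card V) ≃ V) :=
  Finset.univ.filter fun σ =>
    2 ≤ (H.neighborSet (σ (p1 H hm σ))).ncard ∧ 2 ≤ (H.neighborSet (σ (p2 H hm σ))).ncard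

lemma card_univ_eq (hm : 2 ≤ (SF H).card) :
    (Finset.univ : Finset (Fin (Fintype.card V) ≃ V)).card =
      ∑ q ∈ (SF H).offDiag, (Fib H hm q).card :=
  Finset.card_eq_sum_card_fiberwise fun σ _ => pairMap_mem_offDiag H hm σ

lemma Pset_card_eq (hm : 2 ≤ (SF H).card) :
    (Pset H hm).card = ∑ q ∈ (DF H).offDiag, (Fib H hm q).card := by
  rw [Finset.card_eq_sum_card_fiberwise (f := pairMap H hm) (t := (DF H).offDiag)
    (fun σ hσ => ?_)]
  · apply Finset.sum_congr rfl
    intro q hq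
    obtain ⟨x, y⟩ := q
    rw [Finset.mem_offDiag] at hq
    congr 1
    ext σ
    simp only [Fib, Pset, Finset.mem_filter, Finset.mem_univ, true_and]
    constructor
    · exact fun h => h.2
    · intro h
      refine ⟨⟨?_, ?_⟩, h⟩
      · have : σ (p1 H hm σ) = x := by
          rw [pairMap, Prod.mk.injEq] at h; exact h.1
        rw [this]; exact (mem_DF H).mp hq.1
      · have : σ (p2 H hm σ) = y := by
          rw [pairMap, Prod.mk.injEq] at h; exact h.2
        rw [this]; exact (mem_DF H).mp hq.2.1
  · rw [Pset, Finset.mem_coe, Finset.mem_filter] at hσ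
    rw [Finset.mem_coe, Finset.mem_offDiag]
    exact ⟨(mem_DF H).mpr hσ.2.1, (mem_DF H).mpr hσ.2.2,
      fun h => p1_ne_p2 H hm σ (σ.injective h)⟩

lemma Pset_card_le_bright (hm : 2 ≤ (SF H).card) :
    (Pset H hm).card ≤ (Finset.univ.filter fun σ => Bright H σ).card := by
  apply Finset.card_le_card_of_injOn (F H hm)
  · intro σ hσ
    rw [Pset, Finset.mem_coe, Finset.mem_filter] at hσ
    rw [Finset.mem_coe, Finset.mem_filter]
    exact ⟨Finset.mem_univ _, bright_F H hm σ hσ.2.1 hσ.2.2⟩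
  · intro σ₁ h₁ σ₂ h₂ heq
    simp only [Pset, Finset.coe_filter, Finset.mem_univ, true_and,
      Set.mem_setOf_eq] at h₁ h₂
    obtain ⟨hx₁, hy₁⟩ := h₁
    obtain ⟨hx₂, hy₂⟩ := h₂
    have hxy₁ : σ₁ (p1 H hm σ₁) ≠ σ₁ (p2 H hm σ₁) :=
      fun h => p1_ne_p2 H hm σ₁ (σ₁.injective h)
    have hxy₂ : σ₂ (p1 H hm σ₂) ≠ σ₂ (p2 H hm σ₂) :=
      fun h => p1_ne_p2 H hm σ₂ (σ₂.injective h)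
    have hT1 : T H (F H hm σ₁) = T H σ₁ := T_trans H (tau_SF H hx₁ hy₁ hxy₁) σ₁
    have hT2 : T H (F H hm σ₂) = T H σ₂ := T_trans H (tau_SF H hx₂ hy₂ hxy₂) σ₂
    have hTT : T H σ₁ = T H σ₂ := by rw [← hT1, heq, hT2]
    have hp1 : p1 H hm σ₁ = p1 H hm σ₂ := p1_congr H hm hTT
    have hp2 : p2 H hm σ₁ = p2 H hm σ₂ := p2_congr H hm hTT
    have hv1 : (F H hm σ₁) (p1 H hm σ₁) = gfun H (σ₁ (p1 H hm σ₁)) := by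
      rw [F, Equiv.trans_apply, tau_x H hx₁ hy₁ hxy₁]
    have hv1' : (F H hm σ₂) (p1 H hm σ₂) = gfun H (σ₂ (p1 H hm σ₂)) := by
      rw [F, Equiv.trans_apply, tau_x H hx₂ hy₂ hxy₂]
    have hv2 : (F H hm σ₁) (p2 H hm σ₁) = gfun H (σ₁ (p2 H hm σ₁)) := by
      rw [F, Equiv.trans_apply, tau_y H hx₁ hy₁ hxy₁]
    have hv2' : (F H hm σ₂) (p2 H hm σ₂) = gfun H (σ₂ (p2 H hm σ₂)) := by
      rw [F, Equiv.trans_apply, tau_y H hx₂ hy₂ hxy₂]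
    have hgx : σ₁ (p1 H hm σ₁) = σ₂ (p1 H hm σ₂) := by
      apply gfun_inj H hx₁ hx₂
      rw [← hv1, ← hv1', ← hp1, heq]
    have hgy : σ₁ (p2 H hm σ₁) = σ₂ (p2 H hm σ₂) := by
      apply gfun_inj H hy₁ hy₂
      rw [← hv2, ← hv2', ← hp2, heq]
    have htaueq : tau H (σ₁ (p1 H hm σ₁)) (σ₁ (p2 H hm σ₁))
        = tau H (σ₂ (p1 H hm σ₂)) (σ₂ (p2 H hm σ₂)) := by rw [hgx, hgy]
    have hs1 : σ₁ = (F H hm σ₁).trans (tau H (σ₁ (p1 H hm σ₁)) (σ₁ (p2 H hm σ₁))).symm := by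
      rw [F]; ext i; simp
    have hs2 : σ₂ = (F H hm σ₂).trans (tau H (σ₂ (p1 H hm σ₂)) (σ₂ (p2 H hm σ₂))).symm := by
      rw [F]; ext i; simp
    rw [hs1, hs2, heq, htaueq]


lemma ncard_S : {v : V | ∃ u, H.Adj v u}.ncard = (SF H).card := by
  rw [Set.ncard_eq_toFinset_card']
  congr 1
  ext v
  simp [SF]

lemma ncard_D : {v : V | 2 ≤ (H.neighborSet v).ncard}.ncard = (DF H).card := by
  rw [Set.ncard_eq_toFinset_card']
  congr 1
  ext v
  simp [DF]

lemma main (hE : 2 ≤ H.edgeSet.ncard) :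
    brightness H ≥
      (Nat.choose {v : V | 2 ≤ (H.neighborSet v).ncard}.ncard 2 : ℝ) /
        (Nat.choose {v : V | ∃ u, H.Adj v u}.ncard 2) := by
  -- at least two non-isolated vertices
  have hadj : ∃ u v, H.Adj u v := by
    have hne : H.edgeSet.Nonempty := by
      rw [← Set.ncard_pos (Set.toFinite _)]; omega
    obtain ⟨e, he⟩ := hne
    induction e using Sym2.ind with
    | _ u v => exact ⟨u, v, he⟩
  obtain ⟨u, v, huv⟩ := hadj
  have hm : 2 ≤ (SF H).card := by
    rw [Nat.succ_le_iff]
    exact Finset.one_lt_card.mpr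
      ⟨u, (mem_SF H).mpr ⟨v, huv⟩, v, (mem_SF H).mpr ⟨u, huv.symm⟩, H.ne_of_adj huv⟩
  set m := (SF H).card with hmm
  set d := (DF H).card with hd
  -- the fixed fiber
  have hV : Nonempty (Fin (Fintype.card V) ≃ V) := ⟨(Fintype.equivFin V).symm⟩
  obtain ⟨σ₀⟩ := hV
  set q₀ := pairMap H hm σ₀ with hq₀
  have hq₀mem : q₀ ∈ (SF H).offDiag := pairMap_mem_offDiag H hm σ₀
  set c := (Fib H hm q₀).card with hc
  -- counting identities
  have hfact : (Finset.univ : Finset (Fin (Fintype.card V) ≃ V)).card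
      = (Fintype.card V).factorial := by
    rw [Finset.card_univ, Fintype.card_equiv (Fintype.equivFin V).symm, Fintype.card_fin]
  have huniv : (Fintype.card V).factorial = (SF H).offDiag.card * c := by
    rw [← hfact, card_univ_eq H hm,
      Finset.sum_congr rfl (fun q hq => fib_card_eq H hm hq hq₀mem), Finset.sum_const,
      smul_eq_mul]
  have hDsub : (DF H).offDiag ⊆ (SF H).offDiag := by
    intro q hq
    rw [Finset.mem_offDiag] at hq ⊢
    exact ⟨DF_subset_SF H hq.1, DF_subset_SF H hq.2.1, hq.2.2⟩
  have hPcard : (Pset H hm).card = (DF H).offDiag.card * c := by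
    rw [Pset_card_eq H hm,
      Finset.sum_congr rfl (fun q hq => fib_card_eq H hm (hDsub hq) hq₀mem),
      Finset.sum_const, smul_eq_mul]
  have hPA : (Pset H hm).card ≤ (Finset.univ.filter fun σ => Bright H σ).card :=
    Pset_card_le_bright H hm
  -- positivity
  have hcpos : 0 < c := by
    rcases Nat.eq_zero_or_pos c with h | h
    · exfalso; have := (Fintype.card V).factorial_pos; rw [huniv, h, mul_zero] at this; omega
    · exact h
  have hmoffpos : 0 < (SF H).offDiag.card := by
    rcases Nat.eq_zero_or_pos (SF H).offDiag.card with h | h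
    · exfalso; have := (Fintype.card V).factorial_pos; rw [huniv, h, zero_mul] at this; omega
    · exact h
  -- brightness as a Finset count
  have hB : (Nat.card {σ : Fin (Fintype.card V) ≃ V // Bright H σ} : ℝ) =
      ((Finset.univ.filter fun σ => Bright H σ).card : ℝ) := by
    rw [Nat.card_eq_fintype_card, Fintype.card_subtype]
  -- cast identities
  have hoffS : ((SF H).offDiag.card : ℝ) = (m : ℝ) * (m - 1) := by
    rw [Finset.offDiag_card, ← hmm]
    have hle : m ≤ m * m := Nat.le_mul_of_pos_left m (by omega)
    push_cast [hle]
    ring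
  have hoffD : ((DF H).offDiag.card : ℝ) = (d : ℝ) * (d - 1) := by
    rw [Finset.offDiag_card, ← hd]
    have hle : d ≤ d * d := by nlinarith
    push_cast [hle]
    ring
  have hchoose : ((d.choose 2 : ℕ) : ℝ) / ((m.choose 2 : ℕ) : ℝ)
      = ((DF H).offDiag.card : ℝ) / ((SF H).offDiag.card : ℝ) := by
    rw [Nat.cast_choose_two, Nat.cast_choose_two, hoffS, hoffD, div_div_div_comm]
    norm_num
  rw [brightness, ncard_S, ncard_D, ← hmm, ← hd, hchoose]
  have hkey : ((DF H).offDiag.card : ℝ) / ((SF H).offDiag.card : ℝ)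
      = ((Pset H hm).card : ℝ) / ((Fintype.card V).factorial : ℝ) := by
    rw [hPcard, huniv]
    push_cast
    rw [mul_div_mul_right _ _ (by exact_mod_cast hcpos.ne')]
  rw [hkey, ge_iff_le, hB, div_le_div_iff_of_pos_right (by positivity)]
  exact_mod_cast hPA

end BrAux

theorem brightness_ge_of_deg_two {V : Type*} [Fintype V] (H : SimpleGraph V)
    (hE : 2 ≤ H.edgeSet.ncard) :
    brightness H ≥
      (Nat.choose {v : V | 2 ≤ (H.neighborSet v).ncard}.ncard 2 : ℝ) /
        (Nat.choose {v : V | ∃ u, H.Adj v u}.ncard 2) :=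
  BrAux.main H hE
end

section
/- For any graph H with at least 2 edges, the brightness satisfies ν(H) ≥ 1/12. -/
section Aux
open Finset
open scoped Classical

variable {V : Type*} [Fintype V] (H : SimpleGraph V)

noncomputable def Wfin : Finset V := univ.filter fun v => ∃ u, H.Adj v u
noncomputable def Dfin : Finset V := univ.filter fun v => Detectable H v
noncomputable def Pfin : Finset V :=
  univ.filter fun x => ∃ y, H.neighborSet x = {y} ∧ H.neighborSet y = {x}

variable {H}

lemma mem_Wfin {v : V} : v ∈ Wfin H ↔ ∃ u, H.Adj v u := by simp [Wfin]
lemma mem_Dfin {v : V} : v ∈ Dfin H ↔ Detectable H v := by simp [Dfin]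
lemma mem_Pfin {x : V} :
    x ∈ Pfin H ↔ ∃ y, H.neighborSet x = {y} ∧ H.neighborSet y = {x} := by simp [Pfin]

lemma Pfin_subset_Dfin : Pfin H ⊆ Dfin H := by
  intro x hx
  rw [mem_Pfin] at hx
  obtain ⟨y, hxy, hyx⟩ := hx
  rw [mem_Dfin]
  refine ⟨⟨y, ?_⟩, Or.inl ?_⟩
  · have : y ∈ H.neighborSet x := by rw [hxy]; rfl
    exact this
  · rw [hxy]; simp

lemma Dfin_subset_Wfin : Dfin H ⊆ Wfin H := by
  intro x hx
  rw [mem_Dfin] at hx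
  rw [mem_Wfin]
  exact hx.1

lemma not_mem_Pfin_of_adj {z w : V} (hz : z ∉ Pfin H) (h : H.Adj z w) : w ∉ Pfin H := by
  intro hw
  rw [mem_Pfin] at hw
  obtain ⟨y, h1, h2⟩ := hw
  have hzy : z ∈ H.neighborSet w := (H.mem_neighborSet w z).2 h.symm
  rw [h1] at hzy
  rcases hzy with rfl
  exact hz (mem_Pfin.2 ⟨w, h2, h1⟩)

lemma three_le_of_triple {s : Finset V} {a b x : V} (ha : a ∈ s) (hb : b ∈ s)
    (hx : x ∈ s) (hab : a ≠ b) (hax : a ≠ x) (hbx : b ≠ x) : 3 ≤ s.card := by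
  classical
  have hsub : ({a, b, x} : Finset V) ⊆ s := by
    intro v hv
    simp only [Finset.mem_insert, Finset.mem_singleton] at hv
    rcases hv with rfl | rfl | rfl <;> assumption
  have hcard : ({a, b, x} : Finset V).card = 3 := by
    rw [Finset.card_insert_of_notMem (by simp [hab, hax]),
      Finset.card_insert_of_notMem (by simp [hbx]), Finset.card_singleton]
  calc 3 = ({a, b, x} : Finset V).card := hcard.symm
    _ ≤ s.card := Finset.card_le_card hsub

lemma card_W'_le : (Wfin H \ Pfin H).card ≤ 2 * (Dfin H \ Pfin H).card := by
  classical
  have hsub : Dfin H \ Pfin H ⊆ Wfin H \ Pfin H :=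
    Finset.sdiff_subset_sdiff Dfin_subset_Wfin le_rfl
  have hsplit := Finset.card_sdiff_add_card_eq_card hsub
  have hinj : ((Wfin H \ Pfin H) \ (Dfin H \ Pfin H)).card ≤ (Dfin H \ Pfin H).card := by
    have hexists : ∀ u ∈ (Wfin H \ Pfin H) \ (Dfin H \ Pfin H),
        ∃ w, H.Adj u w ∧ H.neighborSet w = {u} := by
      intro u hu
      rw [Finset.mem_sdiff, Finset.mem_sdiff] at hu
      obtain ⟨⟨huW, huP⟩, huD⟩ := hu
      have huD' : u ∉ Dfin H := fun h => huD (Finset.mem_sdiff.2 ⟨h, huP⟩)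
      rw [mem_Dfin, Detectable] at huD'
      push_neg at huD'
      obtain ⟨hne1, w, hw, hw2⟩ := huD' (mem_Wfin.1 huW)
      have huw : u ∈ H.neighborSet w := (H.mem_neighborSet w u).2 hw.symm
      have hpos : 1 ≤ (H.neighborSet w).ncard :=
        (Set.ncard_pos (Set.toFinite _)).2 ⟨u, huw⟩
      have h1 : (H.neighborSet w).ncard = 1 := by omega
      obtain ⟨a, hA⟩ := Set.ncard_eq_one.1 h1
      rw [hA] at huw
      rcases huw with rfl
      exact ⟨w, hw, hA⟩
    apply Finset.card_le_card_of_injOn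
      (fun u => if h : ∃ w, H.Adj u w ∧ H.neighborSet w = {u} then h.choose else u)
    · intro u hu
      have hex := hexists u hu
      simp only [Finset.mem_coe] at hu ⊢
      rw [dif_pos hex]
      obtain ⟨hadj, hN⟩ := hex.choose_spec
      rw [Finset.mem_sdiff, Finset.mem_sdiff] at hu
      rw [Finset.mem_sdiff, mem_Dfin]
      refine ⟨⟨⟨u, hadj.symm⟩, Or.inl (by rw [hN]; simp)⟩, ?_⟩
      exact not_mem_Pfin_of_adj hu.1.2 hadj
    · intro u1 hu1 u2 hu2 heq
      rw [Finset.mem_coe] at hu1 hu2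
      have hx1 := hexists u1 hu1
      have hx2 := hexists u2 hu2
      simp only [dif_pos hx1, dif_pos hx2] at heq
      have h1 := hx1.choose_spec.2
      have h2 := hx2.choose_spec.2
      rw [heq] at h1
      rw [h1] at h2
      exact Set.singleton_eq_singleton_iff.1 h2
  omega

lemma three_le_card_W' (h : (Wfin H \ Pfin H).Nonempty) : 3 ≤ (Wfin H \ Pfin H).card := by
  classical
  obtain ⟨z, hz⟩ := h
  rw [Finset.mem_sdiff] at hz
  obtain ⟨hzW, hzP⟩ := hz
  obtain ⟨w, hzw⟩ := mem_Wfin.1 hzW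
  have hwW' : w ∈ Wfin H \ Pfin H :=
    Finset.mem_sdiff.2 ⟨mem_Wfin.2 ⟨z, hzw.symm⟩, not_mem_Pfin_of_adj hzP hzw⟩
  have hzw' : z ≠ w := hzw.ne
  have hzmem : z ∈ Wfin H \ Pfin H := Finset.mem_sdiff.2 ⟨hzW, hzP⟩
  have hex : (∃ v, H.Adj z v ∧ v ≠ w) ∨ (∃ v, H.Adj w v ∧ v ≠ z) := by
    by_contra hc
    push_neg at hc
    apply hzP
    rw [mem_Pfin]
    refine ⟨w, ?_, ?_⟩
    · ext a
      simp only [SimpleGraph.mem_neighborSet, Set.mem_singleton_iff]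
      exact ⟨fun ha => hc.1 a ha, fun ha => ha ▸ hzw⟩
    · ext a
      simp only [SimpleGraph.mem_neighborSet, Set.mem_singleton_iff]
      exact ⟨fun ha => hc.2 a ha, fun ha => ha ▸ hzw.symm⟩
  rcases hex with ⟨v, hv, hvw⟩ | ⟨v, hv, hvz⟩
  · have hvW' : v ∈ Wfin H \ Pfin H :=
      Finset.mem_sdiff.2 ⟨mem_Wfin.2 ⟨z, hv.symm⟩, not_mem_Pfin_of_adj hzP hv⟩
    exact three_le_of_triple hzmem hwW' hvW' hzw' hv.ne (Ne.symm hvw)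
  · have hvW' : v ∈ Wfin H \ Pfin H :=
      Finset.mem_sdiff.2 ⟨mem_Wfin.2 ⟨w, hv.symm⟩, not_mem_Pfin_of_adj (Finset.mem_sdiff.1 hwW').2 hv⟩
    exact three_le_of_triple hzmem hwW' hvW' hzw' (Ne.symm hvz) hv.ne

variable (H)
noncomputable def GPfin : Finset (V × V) :=
  (Dfin H).offDiag.filter fun q => H.neighborSet q.1 ≠ {q.2}
variable {H}

lemma offDiag_le_GP : (Dfin H).offDiag.card ≤ (GPfin H).card + (Pfin H).card := by
  classical
  have hsplit := Finset.card_filter_add_card_filter_not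
    (s := (Dfin H).offDiag) (p := fun q => H.neighborSet q.1 ≠ {q.2})
  have hbad : ((Dfin H).offDiag.filter fun q => ¬ H.neighborSet q.1 ≠ {q.2}).card
      ≤ (Pfin H).card := by
    apply Finset.card_le_card_of_injOn Prod.fst
    · intro q hq
      rw [Finset.mem_coe] at hq ⊢
      rw [Finset.mem_filter, not_not] at hq
      obtain ⟨hoff, hN⟩ := hq
      rw [Finset.mem_offDiag] at hoff
      obtain ⟨h1, h2, h12⟩ := hoff
      have hadj : H.Adj q.1 q.2 := by
        have : q.2 ∈ H.neighborSet q.1 := by rw [hN]; rfl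
        exact this
      rw [mem_Pfin]
      refine ⟨q.2, hN, ?_⟩
      have hD2 := (mem_Dfin.1 h2).2
      rcases hD2 with hc1 | hc2
      · obtain ⟨a, hA⟩ := Set.ncard_eq_one.1 hc1
        have : q.1 ∈ H.neighborSet q.2 := (H.mem_neighborSet _ _).2 hadj.symm
        rw [hA] at this ⊢
        rcases this with rfl
        rfl
      · have := hc2 q.1 hadj.symm
        rw [hN] at this
        simp at this
    · intro q1 hq1 q2 hq2 heq
      simp only [Finset.coe_filter, Set.mem_setOf_eq, not_not] at hq1 hq2
      have h1 := hq1.2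
      have h2 := hq2.2
      rw [heq] at h1
      rw [h1] at h2
      have := Set.singleton_eq_singleton_iff.1 h2
      exact Prod.ext heq this
  calc (Dfin H).offDiag.card
      = ((Dfin H).offDiag.filter fun q => H.neighborSet q.1 ≠ {q.2}).card
        + ((Dfin H).offDiag.filter fun q => ¬ H.neighborSet q.1 ≠ {q.2}).card := hsplit.symm
    _ ≤ (GPfin H).card + (Pfin H).card := by
        rw [GPfin]; omega

lemma arith_main (w' p dd G : ℕ) (h3 : w' ≤ 2 * dd) (hdw : dd ≤ w')
    (h4 : w' = 0 ∨ 3 ≤ w') (h5 : 3 ≤ w' + p)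
    (hGP : (dd + p) * (dd + p) - (dd + p) ≤ G + p) :
    (w' + p) * (w' + p) - (w' + p) ≤ 12 * G := by
  rw [tsub_le_iff_right] at hGP ⊢
  have hw0 : (0:ℤ) ≤ (w':ℤ) := Int.natCast_nonneg _
  have hp0 : (0:ℤ) ≤ (p:ℤ) := Int.natCast_nonneg _
  have hdd0 : (0:ℤ) ≤ (dd:ℤ) := Int.natCast_nonneg _
  rcases h4 with rfl | h4
  · have hdd : dd = 0 := by omega
    subst hdd
    zify at hGP h5 ⊢
    nlinarith [hGP, h5, mul_le_mul_of_nonneg_right h5 hp0]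
  · have hd2 : 2 ≤ dd := by omega
    zify at hGP h5 hd2 h3 hdw h4 ⊢
    nlinarith [hGP,
      mul_nonneg (by linarith : (0:ℤ) ≤ 2*(dd:ℤ) - (w':ℤ))
        (by linarith : (0:ℤ) ≤ (w':ℤ) + 2*(p:ℤ) + 2*(dd:ℤ)),
      mul_nonneg (by linarith : (0:ℤ) ≤ (dd:ℤ) - 2) hdd0,
      mul_nonneg hp0 (by linarith : (0:ℤ) ≤ 20*(dd:ℤ) - 23)]

lemma three_le_m (hE : 2 ≤ H.edgeSet.ncard) : 3 ≤ (Wfin H).card := by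
  classical
  have h1 : 1 < H.edgeSet.ncard := by omega
  rw [Set.one_lt_ncard (H.edgeSet.toFinite)] at h1
  obtain ⟨e₁, he₁, e₂, he₂, hne⟩ := h1
  revert he₁ he₂ hne
  refine Sym2.ind (fun a b => ?_) e₁
  refine Sym2.ind (fun c d => ?_) e₂
  intro he₁ he₂ hne
  rw [SimpleGraph.mem_edgeSet] at he₁ he₂
  have haW : a ∈ Wfin H := mem_Wfin.2 ⟨b, he₁⟩
  have hbW : b ∈ Wfin H := mem_Wfin.2 ⟨a, he₁.symm⟩
  have hcW : c ∈ Wfin H := mem_Wfin.2 ⟨d, he₂⟩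
  have hdW : d ∈ Wfin H := mem_Wfin.2 ⟨c, he₂.symm⟩
  have hab : a ≠ b := he₁.ne
  rw [Ne, Sym2.eq_iff] at hne
  push_neg at hne
  by_cases hca : c = a
  · subst hca
    have hdb : d ≠ b := fun h => (hne.1 rfl) h.symm
    exact three_le_of_triple haW hbW hdW hab (Ne.symm he₂.ne') (Ne.symm hdb)
  · by_cases hcb : c = b
    · subst hcb
      have hda : d ≠ a := fun h => (hne.2 h.symm) rfl
      exact three_le_of_triple haW hbW hdW hab (Ne.symm hda) (Ne.symm he₂.ne')
    · exact three_le_of_triple haW hbW hcW hab (Ne.symm hca) (Ne.symm hcb)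

lemma structural (hE : 2 ≤ H.edgeSet.ncard) :
    (Wfin H).offDiag.card ≤ 12 * (GPfin H).card := by
  classical
  have hm3 : 3 ≤ (Wfin H).card := three_le_m hE
  have hPD : Pfin H ⊆ Dfin H := Pfin_subset_Dfin
  have hDW : Dfin H ⊆ Wfin H := Dfin_subset_Wfin
  have hPW : Pfin H ⊆ Wfin H := hPD.trans hDW
  have hm : (Wfin H \ Pfin H).card + (Pfin H).card = (Wfin H).card :=
    Finset.card_sdiff_add_card_eq_card hPW
  have hd : (Dfin H \ Pfin H).card + (Pfin H).card = (Dfin H).card :=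
    Finset.card_sdiff_add_card_eq_card hPD
  have h3 := card_W'_le (H := H)
  have hdw : (Dfin H \ Pfin H).card ≤ (Wfin H \ Pfin H).card :=
    Finset.card_le_card (Finset.sdiff_subset_sdiff hDW le_rfl)
  have h4 : (Wfin H \ Pfin H).card = 0 ∨ 3 ≤ (Wfin H \ Pfin H).card := by
    rcases (Wfin H \ Pfin H).eq_empty_or_nonempty with he | hne
    · left; simp [he]
    · right; exact three_le_card_W' hne
  have hGP := offDiag_le_GP (H := H)
  rw [Finset.offDiag_card] at hGP ⊢
  rw [← hd] at hGP
  rw [← hm]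
  exact arith_main _ _ _ _ h3 hdw h4 (by omega) hGP

def Last2 (H : SimpleGraph V) (σ : Fin (Fintype.card V) ≃ V) (x y : V) : Prop :=
  (∀ w, w ≠ y → (∃ u, H.Adj w u) → σ.symm w < σ.symm y) ∧
  (∀ w, w ≠ y → w ≠ x → (∃ u, H.Adj w u) → σ.symm w < σ.symm x)

variable (H)
noncomputable def Ev (x y : V) : Finset (Fin (Fintype.card V) ≃ V) :=
  univ.filter fun σ => Last2 H σ x y
variable {H}

lemma mem_Ev {x y : V} {σ : Fin (Fintype.card V) ≃ V} :
    σ ∈ Ev H x y ↔ Last2 H σ x y := by simp [Ev]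

lemma last2_relabel {τ : V ≃ V} (hτ : ∀ v, (∃ u, H.Adj v u) ↔ ∃ u, H.Adj (τ v) u)
    {σ : Fin (Fintype.card V) ≃ V} {x y : V} (h : Last2 H σ x y) :
    Last2 H (σ.trans τ) (τ x) (τ y) := by
  constructor
  · intro w hw hiso
    have h1 : τ.symm w ≠ y := by
      intro he; apply hw; rw [← he, Equiv.apply_symm_apply]
    have h2 : ∃ u, H.Adj (τ.symm w) u := by
      rw [hτ (τ.symm w), Equiv.apply_symm_apply]; exact hiso
    have h3 := h.1 _ h1 h2
    rw [Equiv.symm_trans_apply, Equiv.symm_trans_apply, Equiv.symm_apply_apply]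
    exact h3
  · intro w hw hw2 hiso
    have h1 : τ.symm w ≠ y := by
      intro he; apply hw; rw [← he, Equiv.apply_symm_apply]
    have h1' : τ.symm w ≠ x := by
      intro he; apply hw2; rw [← he, Equiv.apply_symm_apply]
    have h2 : ∃ u, H.Adj (τ.symm w) u := by
      rw [hτ (τ.symm w), Equiv.apply_symm_apply]; exact hiso
    have h3 := h.2 _ h1 h1' h2
    rw [Equiv.symm_trans_apply, Equiv.symm_trans_apply, Equiv.symm_apply_apply]
    exact h3

lemma card_Ev_relabel {τ : V ≃ V} (hτ : ∀ v, (∃ u, H.Adj v u) ↔ ∃ u, H.Adj (τ v) u)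
    (x y : V) : (Ev H x y).card = (Ev H (τ x) (τ y)).card := by
  classical
  have hτ' : ∀ v, (∃ u, H.Adj v u) ↔ ∃ u, H.Adj (τ.symm v) u := by
    intro v
    conv_lhs => rw [← τ.apply_symm_apply v]
    exact (hτ (τ.symm v)).symm
  refine Finset.card_bij' (fun σ _ => σ.trans τ) (fun σ _ => σ.trans τ.symm) ?_ ?_ ?_ ?_
  · intro σ hσ
    rw [mem_Ev] at hσ ⊢
    exact last2_relabel hτ hσ
  · intro σ hσ
    rw [mem_Ev] at hσ ⊢
    have := last2_relabel hτ' hσ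
    simpa using this
  · intro σ _
    ext i
    simp
  · intro σ _
    ext i
    simp

lemma swap_pres {a b : V} (ha : a ∈ Wfin H) (hb : b ∈ Wfin H) :
    ∀ v, (∃ u, H.Adj v u) ↔ ∃ u, H.Adj (Equiv.swap a b v) u := by
  intro v
  rcases eq_or_ne v a with rfl | hva
  · rw [Equiv.swap_apply_left]
    exact ⟨fun _ => mem_Wfin.1 hb, fun _ => mem_Wfin.1 ha⟩
  rcases eq_or_ne v b with rfl | hvb
  · rw [Equiv.swap_apply_right]
    exact ⟨fun _ => mem_Wfin.1 ha, fun _ => mem_Wfin.1 hb⟩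
  · rw [Equiv.swap_apply_of_ne_of_ne hva hvb]

lemma card_Ev_eq {x y x' y' : V} (hx : x ∈ Wfin H) (hy : y ∈ Wfin H)
    (hx' : x' ∈ Wfin H) (hy' : y' ∈ Wfin H) (hxy : x ≠ y) (hxy' : x' ≠ y') :
    (Ev H x y).card = (Ev H x' y').card := by
  classical
  set x₁ := Equiv.swap y y' x with hx₁def
  have hx₁W : x₁ ∈ Wfin H := by
    rcases eq_or_ne x y with rfl | h1
    · exact absurd rfl hxy
    rcases eq_or_ne x y' with rfl | h2
    · rw [hx₁def, Equiv.swap_apply_right]; exact hy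
    · rw [hx₁def, Equiv.swap_apply_of_ne_of_ne h1 h2]; exact hx
  have hx₁y' : x₁ ≠ y' := by
    rcases eq_or_ne x y' with rfl | h2
    · rw [hx₁def, Equiv.swap_apply_right]
      exact Ne.symm hxy
    · rw [hx₁def, Equiv.swap_apply_of_ne_of_ne hxy h2]; exact h2
  have h1 := card_Ev_relabel (swap_pres hy hy') x y
  rw [Equiv.swap_apply_left] at h1
  have h2 := card_Ev_relabel (swap_pres hx₁W hx') x₁ y'
  rw [Equiv.swap_apply_of_ne_of_ne (Ne.symm hx₁y') (Ne.symm hxy')] at h2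
  rw [Equiv.swap_apply_left] at h2
  rw [h1, ← h2, hx₁def]

lemma Ev_disjoint {x y x' y' : V} (hx : x ∈ Wfin H) (hy : y ∈ Wfin H)
    (hx' : x' ∈ Wfin H) (hy' : y' ∈ Wfin H) (hxy : x ≠ y) (hxy' : x' ≠ y')
    (hne : ¬(x = x' ∧ y = y')) : Disjoint (Ev H x y) (Ev H x' y') := by
  classical
  rw [Finset.disjoint_left]
  intro σ h1 h2
  rw [mem_Ev] at h1 h2
  have L1 := h1
  have L2 := h2
  rcases eq_or_ne y y' with rfl | hyy
  · have hxx : x ≠ x' := fun he => hne ⟨he, rfl⟩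
    have a1 := L1.2 x' hxy' (Ne.symm hxx) (mem_Wfin.1 hx')
    have a2 := L2.2 x hxy hxx (mem_Wfin.1 hx)
    exact absurd a1 (lt_asymm a2)
  · have a1 := L1.1 y' (Ne.symm hyy) (mem_Wfin.1 hy')
    have a2 := L2.1 y hyy (mem_Wfin.1 hy)
    exact absurd a1 (lt_asymm a2)

lemma sum_card_Ev (hm : 2 ≤ (Wfin H).card) :
    ∑ q ∈ (Wfin H).offDiag, (Ev H q.1 q.2).card = Nat.factorial (Fintype.card V) := by
  classical
  have hdisj : ∀ q ∈ (Wfin H).offDiag, ∀ q' ∈ (Wfin H).offDiag, q ≠ q' →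
      Disjoint (Ev H q.1 q.2) (Ev H q'.1 q'.2) := by
    intro q hq q' hq' hne
    rw [Finset.mem_offDiag] at hq hq'
    refine Ev_disjoint hq.1 hq.2.1 hq'.1 hq'.2.1 hq.2.2 hq'.2.2 ?_
    rintro ⟨e1, e2⟩
    exact hne (Prod.ext e1 e2)
  rw [← Finset.card_biUnion hdisj]
  have huniv : (Wfin H).offDiag.biUnion (fun q => Ev H q.1 q.2) = Finset.univ := by
    apply Finset.eq_univ_of_forall
    intro σ
    rw [Finset.mem_biUnion]
    have hne : (Wfin H).Nonempty := Finset.card_pos.1 (by omega)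
    obtain ⟨y, hyW, hymax⟩ := Finset.exists_max_image (Wfin H) (fun v => σ.symm v) hne
    have hne2 : ((Wfin H).erase y).Nonempty := by
      rw [← Finset.card_pos, Finset.card_erase_of_mem hyW]; omega
    obtain ⟨x, hxE, hxmax⟩ := Finset.exists_max_image _ (fun v => σ.symm v) hne2
    obtain ⟨hxy, hxW⟩ := Finset.mem_erase.1 hxE
    refine ⟨(x, y), Finset.mem_offDiag.2 ⟨hxW, hyW, hxy⟩, ?_⟩
    rw [mem_Ev]
    refine ⟨?_, ?_⟩
    · intro w hw hiso
      have hwW : w ∈ Wfin H := mem_Wfin.2 hiso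
      exact lt_of_le_of_ne (hymax w hwW) (fun he => hw (σ.symm.injective he))
    · intro w hwy hwx hiso
      have hwW : w ∈ (Wfin H).erase y := Finset.mem_erase.2 ⟨hwy, mem_Wfin.2 hiso⟩
      exact lt_of_le_of_ne (hxmax w hwW) (fun he => hwx (σ.symm.injective he))
  rw [huniv, Finset.card_univ,
    Fintype.card_equiv ((Fintype.equivFin V).symm), Fintype.card_fin]

lemma bright_of_last2 {σ : Fin (Fintype.card V) ≃ V} {x y : V}
    (hxD : Detectable H x) (hyD : Detectable H y)
    (hxy : x ≠ y) (hN : H.neighborSet x ≠ {y}) (h : Last2 H σ x y) : Bright H σ := by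
  obtain ⟨u₀, hu₀⟩ := hxD.1
  have hux : ∃ u, H.Adj x u ∧ u ≠ y := by
    by_contra hc
    push_neg at hc
    apply hN
    ext z
    simp only [SimpleGraph.mem_neighborSet, Set.mem_singleton_iff]
    constructor
    · exact fun hz => hc z hz
    · rintro rfl
      have := hc u₀ hu₀
      subst this
      exact hu₀
  obtain ⟨u, hu, huy⟩ := hux
  obtain ⟨w, hw⟩ := hyD.1
  refine ⟨σ.symm x, σ.symm y, h.1 x hxy hxD.1, ?_, ?_, ?_, ?_, ?_, ?_⟩
  · refine ⟨σ.symm u, h.2 u huy (fun he => H.irrefl (he ▸ hu)) ⟨x, hu.symm⟩, ?_⟩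
    simpa using hu
  · refine ⟨σ.symm w, h.1 w (fun he => H.irrefl (he ▸ hw)) ⟨y, hw.symm⟩, ?_⟩
    simpa using hw
  · intro j hj
    obtain ⟨j', _, hadj⟩ := hj
    rcases eq_or_ne (σ j) y with he | he
    · exact le_of_eq (by rw [← he]; simp)
    · have := h.1 (σ j) he ⟨σ j', hadj⟩
      simpa using this.le
  · intro j hj hjne
    obtain ⟨j', _, hadj⟩ := hj
    have hey : σ j ≠ y := fun he => hjne (by rw [← he]; simp)
    rcases eq_or_ne (σ j) x with he | he
    · exact le_of_eq (by rw [← he]; simp)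
    · have := h.2 (σ j) hey he ⟨σ j', hadj⟩
      simpa using this.le
  · simpa using hxD
  · simpa using hyD

lemma key (hE : 2 ≤ H.edgeSet.ncard) :
    Nat.factorial (Fintype.card V)
      ≤ 12 * Nat.card {σ : Fin (Fintype.card V) ≃ V // Bright H σ} := by
  classical
  have hm3 : 3 ≤ (Wfin H).card := three_le_m hE
  have hstruct := structural hE
  have hmOff : ((Wfin H).offDiag).Nonempty := by
    rw [← Finset.card_pos, Finset.offDiag_card]
    have : (Wfin H).card < (Wfin H).card * (Wfin H).card := by nlinarith
    omega
  obtain ⟨q₀, hq₀⟩ := hmOff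
  set c := (Ev H q₀.1 q₀.2).card with hc
  rw [Finset.mem_offDiag] at hq₀
  have hconst : ∀ q ∈ (Wfin H).offDiag, (Ev H q.1 q.2).card = c := by
    intro q hq
    rw [Finset.mem_offDiag] at hq
    exact card_Ev_eq hq.1 hq.2.1 hq₀.1 hq₀.2.1 hq.2.2 hq₀.2.2
  have hsum : (Wfin H).offDiag.card * c = Nat.factorial (Fintype.card V) := by
    rw [← sum_card_Ev (H := H) (by omega), Finset.sum_congr rfl hconst, Finset.sum_const,
      smul_eq_mul]
  have hGPsub : GPfin H ⊆ (Wfin H).offDiag := by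
    intro q hq
    rw [GPfin, Finset.mem_filter, Finset.mem_offDiag] at hq
    exact Finset.mem_offDiag.2
      ⟨Dfin_subset_Wfin hq.1.1, Dfin_subset_Wfin hq.1.2.1, hq.1.2.2⟩
  have hdisj2 : ∀ q ∈ GPfin H, ∀ q' ∈ GPfin H, q ≠ q' →
      Disjoint (Ev H q.1 q.2) (Ev H q'.1 q'.2) := by
    intro q hq q' hq' hne
    have h1 := Finset.mem_offDiag.1 (hGPsub hq)
    have h2 := Finset.mem_offDiag.1 (hGPsub hq')
    refine Ev_disjoint h1.1 h1.2.1 h2.1 h2.2.1 h1.2.2 h2.2.2 ?_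
    rintro ⟨e1, e2⟩
    exact hne (Prod.ext e1 e2)
  have hBsub : (GPfin H).biUnion (fun q => Ev H q.1 q.2) ⊆ univ.filter (Bright H) := by
    intro σ hσ
    rw [Finset.mem_biUnion] at hσ
    obtain ⟨q, hq, hσq⟩ := hσ
    rw [mem_Ev] at hσq
    rw [GPfin, Finset.mem_filter, Finset.mem_offDiag] at hq
    rw [Finset.mem_filter]
    exact ⟨Finset.mem_univ _,
      bright_of_last2 (mem_Dfin.1 hq.1.1) (mem_Dfin.1 hq.1.2.1) hq.1.2.2 hq.2 hσq⟩
  have hcount : (GPfin H).card * c ≤ (univ.filter (Bright H)).card := by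
    calc (GPfin H).card * c = ∑ q ∈ GPfin H, (Ev H q.1 q.2).card := by
          rw [Finset.sum_congr rfl (fun q hq => hconst q (hGPsub hq)),
            Finset.sum_const, smul_eq_mul]
      _ = ((GPfin H).biUnion (fun q => Ev H q.1 q.2)).card :=
          (Finset.card_biUnion hdisj2).symm
      _ ≤ _ := Finset.card_le_card hBsub
  have hNat : Nat.card {σ : Fin (Fintype.card V) ≃ V // Bright H σ}
      = (univ.filter (Bright H)).card := by
    rw [Nat.card_eq_fintype_card, Fintype.card_subtype]
  rw [hNat]
  calc Nat.factorial (Fintype.card V) = (Wfin H).offDiag.card * c := hsum.symm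
    _ ≤ (12 * (GPfin H).card) * c := Nat.mul_le_mul_right _ hstruct
    _ = 12 * ((GPfin H).card * c) := by ring
    _ ≤ 12 * (univ.filter (Bright H)).card := Nat.mul_le_mul_left _ hcount

end Aux

theorem brightness_ge_one_twelfth {V : Type*} [Fintype V] (H : SimpleGraph V)
    (hE : 2 ≤ H.edgeSet.ncard) :
    brightness H ≥ 1 / 12 := by
  classical
  have hk := key hE
  have hpos : (0:ℝ) < (Nat.factorial (Fintype.card V) : ℝ) := by
    exact_mod_cast Nat.factorial_pos _
  rw [brightness, ge_iff_le, div_le_div_iff₀ (by norm_num) hpos, one_mul]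
  have h2 : ((Nat.factorial (Fintype.card V)) : ℝ)
      ≤ ((12 * Nat.card {σ : Fin (Fintype.card V) ≃ V // Bright H σ} : ℕ) : ℝ) := by
    exact_mod_cast hk
  push_cast at h2
  linarith
end
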